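/- arXiv:2406.12541 — 2 statements merged into one kernel-verified Lean document; each statement's English description precedes it below -/
import Mathlib

section
/- Let Ω ⊂ ℝ² be a Lipschitz polygon with a mesh 𝒯 and let 𝒞 be a symmetric uniformly positive definite tensor field on 𝕊. For f ∈ L²(Ω), the primal hybrid formulation of the Kirchhoff–Love plate problem — find u ∈ H²(𝒯) and η ∈ H^{−3/2,−1/2}(𝒮) := tr^{divdiv}_𝒮(H(div div,Ω;𝕊)) such that (𝒞D²u, D²δu)_𝒯 + ⟨η, δu⟩_𝒮 = (f, δu) for all δu ∈ H²(𝒯), and ⟨δη, u⟩_𝒮 = 0 for all δη ∈ H^{−3/2,−1/2}(𝒮) — is well posed with ‖u‖_{2,𝒯} + ‖η‖_{−3/2,−1/2,𝒮} ≤ C‖f‖, C independent of f and 𝒯. Moreover u ∈ H²₀(Ω), η = tr^{divdiv}_𝒮(𝒞D²u), and div div(𝒞D²u) = f. -/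
open scoped RealInnerProductSpace

noncomputable section

/-- Skeleton trace pairing
`eS v M = ⟨γ_{dDiv}(M), v⟩_𝒮 = (div div M, v)_𝒯 − (M, D²v)_𝒯`. -/
def eS {L2 L2S H2T DDT : Type*}
    [NormedAddCommGroup L2] [InnerProductSpace ℝ L2]
    [NormedAddCommGroup L2S] [InnerProductSpace ℝ L2S]
    [NormedAddCommGroup H2T] [InnerProductSpace ℝ H2T]
    [NormedAddCommGroup DDT] [InnerProductSpace ℝ DDT]
    (ι2 : H2T →L[ℝ] L2) (D2T : H2T →L[ℝ] L2S)
    (ιM : DDT →L[ℝ] L2S) (ddT : DDT →L[ℝ] L2)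
    (v : H2T) (M : DDT) : ℝ :=
  ⟪ddT M, ι2 v⟫ - ⟪ιM M, D2T v⟫

/- STATEMENT 14 (Theorem 3.1: well-posedness of the primal hybrid formulation
(3.6) of the Kirchhoff–Love plate problem).  This is the instance `A = D²`
(Hessian), `A* = div div`, `U = 𝕊`, `H̃(A,𝒯) = H²(𝒯)` (the *fully broken*
space) of the abstract primal hybrid theorem.  Since Sobolev spaces on meshed
polygons are not available, the concrete spaces are encoded as abstract
Hilbert spaces (the mesh `𝒯` of the Lipschitz polygon `Ω` is fixed):
* `L2 = L²(Ω)`, `L2S = L²(Ω;𝕊)`;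
* `H2T = H²(𝒯)` the broken `H²` space with broken graph norm
  `‖v‖²_{2,𝒯} = ‖v‖² + ‖D²v‖²_𝒯` (`normH2T`), embedding `ι2` into `L²(Ω)` and
  piecewise Hessian `D2T = D²_𝒯`;
* `DDT = H(div div,𝒯;𝕊)` with embedding `ιM` and piecewise `ddT = (div div)_𝒯`;
* `HA = H(D²) = H²(Ω)` and `HAs = H(div div,Ω;𝕊)` as subspaces; membership
  `v ∈ H²₀(Ω) = H₀(D²)` is `v ∈ HA ∧ ∀ M ∈ HAs, eS v M = 0`;
* a trace `η ∈ H^{−3/2,−1/2}(𝒮) = γ_{dDiv}(H(div div,Ω;𝕊))` is represented by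
  `M0 ∈ HAs`, `⟨η, δu⟩_𝒮 = eS δu M0`, with minimum-extension norm
  `‖η‖_{−3/2,−1/2,𝒮}` (an `sInf` below);
* `C𝒞` is the symmetric uniformly positive definite rigidity tensor `𝒞`.
Required hypotheses (verified in the paper): the Poincaré–Friedrichs
inequality `‖v‖ ≤ C‖D²v‖` on `H²₀(Ω)` (`hPF`) and the identification
`H₀(D²) = H²₀(Ω)` together with closedness of `D²`/`div div`
(`hmaxA`, `hmaxAs`).  Conclusion: for every `f ∈ L²(Ω)` problem (3.6) is well
posed; `‖u‖_{2,𝒯} + ‖η‖_{−3/2,−1/2,𝒮} ≤ C‖f‖` with `C` independent of `f` and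
of the mesh; moreover `u ∈ H²₀(Ω)`, `η = γ_{dDiv}(𝒞D²u)` and
`div div (𝒞D²u) = f`. -/
set_option maxHeartbeats 1000000 in
theorem kirchhoff_love_primal_hybrid_wellposed
    {L2 L2S H2T DDT : Type*}
    [NormedAddCommGroup L2] [InnerProductSpace ℝ L2] [CompleteSpace L2]
    [NormedAddCommGroup L2S] [InnerProductSpace ℝ L2S] [CompleteSpace L2S]
    [NormedAddCommGroup H2T] [InnerProductSpace ℝ H2T] [CompleteSpace H2T]
    [NormedAddCommGroup DDT] [InnerProductSpace ℝ DDT] [CompleteSpace DDT]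
    (ι2 : H2T →L[ℝ] L2) (D2T : H2T →L[ℝ] L2S)
    (ιM : DDT →L[ℝ] L2S) (ddT : DDT →L[ℝ] L2)
    (normH2T : ∀ v : H2T, ‖v‖ ^ 2 = ‖ι2 v‖ ^ 2 + ‖D2T v‖ ^ 2)
    (normDDT : ∀ M : DDT, ‖M‖ ^ 2 = ‖ιM M‖ ^ 2 + ‖ddT M‖ ^ 2)
    (HA : Submodule ℝ H2T) (hHAcl : IsClosed (HA : Set H2T))   -- H²(Ω)
    (HAs : Submodule ℝ DDT) (hHAscl : IsClosed (HAs : Set DDT)) -- H(div div,Ω;𝕊)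
    -- rigidity tensor 𝒞 : symmetric, uniformly positive definite
    (C𝒞 : L2S →L[ℝ] L2S) (hCsym : ∀ x y : L2S, ⟪C𝒞 x, y⟫ = ⟪x, C𝒞 y⟫)
    (c𝒞 : ℝ) (hc𝒞 : 0 < c𝒞) (hCcoer : ∀ x : L2S, c𝒞 * ‖x‖ ^ 2 ≤ ⟪C𝒞 x, x⟫)
    -- Poincaré–Friedrichs inequality on H²₀(Ω)
    (CPF : ℝ) (hCPF : 0 < CPF)
    (hPF : ∀ v : H2T, v ∈ HA → (∀ M ∈ HAs, eS ι2 D2T ιM ddT v M = 0) →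
      ‖ι2 v‖ ≤ CPF * ‖D2T v‖)
    -- D² closed: distributional characterization of H²₀(Ω) = H₀(D²) in H²(𝒯)
    (hmaxA : ∀ v : H2T, (∀ M ∈ HAs, eS ι2 D2T ιM ddT v M = 0) → v ∈ HA)
    -- div div is the (maximal) adjoint of D² restricted to H²₀(Ω)
    (hmaxAs : ∀ (z : L2S) (g : L2),
      (∀ v : H2T, v ∈ HA → (∀ M ∈ HAs, eS ι2 D2T ιM ddT v M = 0) →
        ⟪z, D2T v⟫ = ⟪g, ι2 v⟫) →
      ∃ M ∈ HAs, ιM M = z ∧ ddT M = g) :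
    ∃ C > 0, ∀ f : L2,
      ∃ (u : H2T) (M0 : DDT), M0 ∈ HAs ∧
        -- (3.6a): (𝒞D²u, D²δu)_𝒯 + ⟨η, δu⟩_𝒮 = (f, δu) for all δu ∈ H²(𝒯)
        (∀ δu : H2T,
          ⟪C𝒞 (D2T u), D2T δu⟫ + eS ι2 D2T ιM ddT δu M0 = ⟪f, ι2 δu⟫) ∧
        -- (3.6b): ⟨δη, u⟩_𝒮 = 0 for all δη ∈ H^{−3/2,−1/2}(𝒮)
        (∀ M ∈ HAs, eS ι2 D2T ιM ddT u M = 0) ∧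
        -- uniqueness of the solution (u, η)
        (∀ (u' : H2T) (M0' : DDT), M0' ∈ HAs →
          (∀ δu : H2T,
            ⟪C𝒞 (D2T u'), D2T δu⟫ + eS ι2 D2T ιM ddT δu M0' = ⟪f, ι2 δu⟫) →
          (∀ M ∈ HAs, eS ι2 D2T ιM ddT u' M = 0) →
          u' = u ∧ ∀ δu : H2T, eS ι2 D2T ιM ddT δu M0' = eS ι2 D2T ιM ddT δu M0) ∧
        -- a priori bound: ‖u‖_{2,𝒯} + ‖η‖_{−3/2,−1/2,𝒮} ≤ C ‖f‖
        ‖u‖ + sInf {r : ℝ | ∃ M ∈ HAs,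
            (∀ v : H2T, eS ι2 D2T ιM ddT v M = eS ι2 D2T ιM ddT v M0) ∧ r = ‖M‖}
          ≤ C * ‖f‖ ∧
        -- regularity: u ∈ H²₀(Ω) (membership in H²(Ω); the trace condition is (3.6b))
        u ∈ HA ∧
        -- η = γ_{dDiv}(𝒞D²u) and div div(𝒞D²u) = f, i.e. (u, 𝒞D²u) solves (3.1)
        (∃ Mc ∈ HAs, ιM Mc = C𝒞 (D2T u) ∧ ddT Mc = f ∧
          ∀ v : H2T, eS ι2 D2T ιM ddT v Mc = eS ι2 D2T ιM ddT v M0) := by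
  classical
  -- the continuous functional v ↦ eS v M
  set Φ : DDT → (H2T →L[ℝ] ℝ) := fun M =>
    ((innerSL ℝ (ddT M)).comp ι2 - (innerSL ℝ (ιM M)).comp D2T) with hΦdef
  have hΦ : ∀ (M : DDT) (v : H2T), Φ M v = eS ι2 D2T ιM ddT v M := by
    intro M v
    simp [hΦdef, eS]
  -- the subspace H²₀(Ω)
  set H20 : Submodule ℝ H2T :=
    { carrier := {v | ∀ M ∈ HAs, Φ M v = 0}
      add_mem' := fun {a b} ha hb M hM => by simp [map_add, ha M hM, hb M hM]
      zero_mem' := fun M hM => by simp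
      smul_mem' := fun c {a} ha M hM => by simp [map_smul, ha M hM] } with hH20def
  have hmem20 : ∀ v : H2T, v ∈ H20 ↔ (∀ M ∈ HAs, eS ι2 D2T ιM ddT v M = 0) := by
    intro v
    constructor
    · intro hv M hM; rw [← hΦ]; exact hv M hM
    · intro hv M hM; rw [hΦ]; exact hv M hM
  have hH20closed : IsClosed (H20 : Set H2T) := by
    have : (H20 : Set H2T) = ⋂ M ∈ HAs, (Φ M) ⁻¹' {(0 : ℝ)} := by
      ext v
      simp only [Set.mem_iInter, Set.mem_preimage, Set.mem_singleton_iff]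
      rfl
    rw [this]
    exact isClosed_biInter fun M _ => isClosed_singleton.preimage (Φ M).continuous
  haveI : CompleteSpace H20 := hH20closed.completeSpace_coe
  -- basic norm facts
  have hD2le : ∀ v : H2T, ‖D2T v‖ ≤ ‖v‖ := by
    intro v
    nlinarith [normH2T v, norm_nonneg (ι2 v), norm_nonneg v, norm_nonneg (D2T v)]
  have hι2le : ∀ v : H2T, ‖ι2 v‖ ≤ ‖v‖ := by
    intro v
    nlinarith [normH2T v, norm_nonneg (ι2 v), norm_nonneg v, norm_nonneg (D2T v)]
  -- elements of H20 are in HA and satisfy the PF bound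
  have hHA20 : ∀ v : H2T, v ∈ H20 → v ∈ HA := fun v hv =>
    hmaxA v ((hmem20 v).1 hv)
  have hPF20 : ∀ v : H2T, v ∈ H20 → ‖ι2 v‖ ≤ CPF * ‖D2T v‖ := fun v hv =>
    hPF v (hHA20 v hv) ((hmem20 v).1 hv)
  have hnorm20 : ∀ v : H2T, v ∈ H20 → ‖v‖ ^ 2 ≤ (CPF ^ 2 + 1) * ‖D2T v‖ ^ 2 := by
    intro v hv
    have h1 := hPF20 v hv
    have h2 := normH2T v
    nlinarith [norm_nonneg (ι2 v), norm_nonneg (D2T v),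
      mul_nonneg hCPF.le (norm_nonneg (D2T v))]
  -- the bilinear form on H20
  set S : H20 →L[ℝ] L2S := D2T.comp H20.subtypeL with hSdef
  set B : H20 →L[ℝ] H20 →L[ℝ] ℝ :=
    (((ContinuousLinearMap.compL ℝ H20 L2S ℝ).flip S).comp
      ((innerSL ℝ).comp (C𝒞.comp S))) with hBdef
  have hB : ∀ v w : H20, B v w = ⟪C𝒞 (D2T (v : H2T)), D2T (w : H2T)⟫ := by
    intro v w
    simp [hBdef, hSdef]
  set α : ℝ := c𝒞 / (CPF ^ 2 + 1) with hαdef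
  have hα : (0 : ℝ) < α := by positivity
  have hcoB : ∀ v : H20, α * ‖v‖ * ‖v‖ ≤ B v v := by
    intro v
    have h1 := hCcoer (D2T (v : H2T))
    have h2 := hnorm20 (v : H2T) v.2
    have hv : ‖v‖ = ‖(v : H2T)‖ := rfl
    rw [hB, hv]
    have hpos : (0 : ℝ) < CPF ^ 2 + 1 := by positivity
    rw [hαdef, div_mul_eq_mul_div, div_mul_eq_mul_div, div_le_iff₀ hpos]
    nlinarith [norm_nonneg (v : H2T), norm_nonneg (D2T (v : H2T)), hc𝒞.le]
  have hcoer : IsCoercive B := ⟨α, hα, hcoB⟩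
  -- the constant
  refine ⟨(1 + ‖C𝒞‖) / α + 1, by positivity, fun f => ?_⟩
  -- solve the variational problem by Lax–Milgram + Riesz
  set ℓ : H20 →L[ℝ] ℝ := (innerSL ℝ f).comp (ι2.comp H20.subtypeL) with hℓdef
  have hℓ : ∀ v : H20, ℓ v = ⟪f, ι2 (v : H2T)⟫ := by
    intro v; simp [hℓdef]
  set w0 : H20 := (InnerProductSpace.toDual ℝ H20).symm ℓ with hw0def
  set u0 : H20 := hcoer.continuousLinearEquivOfBilin.symm w0 with hu0def
  have hvar0 : ∀ v : H20, B u0 v = ⟪f, ι2 (v : H2T)⟫ := by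
    intro v
    have h1 : ⟪hcoer.continuousLinearEquivOfBilin u0, v⟫ = B u0 v :=
      hcoer.continuousLinearEquivOfBilin_apply u0 v
    have h2 : hcoer.continuousLinearEquivOfBilin u0 = w0 := by
      rw [hu0def]; exact hcoer.continuousLinearEquivOfBilin.apply_symm_apply w0
    rw [← h1, h2, hw0def, InnerProductSpace.toDual_symm_apply, hℓ]
  have hkey : ∃ u : H2T, u ∈ H20 ∧
      (∀ v : H2T, v ∈ H20 → ⟪C𝒞 (D2T u), D2T v⟫ = ⟪f, ι2 v⟫) ∧
      α * ‖u‖ * ‖u‖ ≤ ⟪f, ι2 u⟫ := by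
    refine ⟨(u0 : H2T), u0.2, fun v hv => ?_, ?_⟩
    · have := hvar0 ⟨v, hv⟩
      rwa [hB] at this
    · have h5 : ‖u0‖ = ‖(u0 : H2T)‖ := rfl
      rw [← h5, ← hvar0 u0]
      exact hcoB u0
  obtain ⟨u, hu20, hvar, hquad⟩ := hkey
  clear hvar0 hu0def u0 hw0def w0 hℓ hℓdef ℓ hcoer hcoB hB hBdef B hSdef S
  -- get the extension Mc by hmaxAs
  obtain ⟨Mc, hMcAs, hMcι, hMcdd⟩ :=
    hmaxAs (C𝒞 (D2T u)) f (fun v hvHA hvtr => hvar v ((hmem20 v).2 hvtr))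
  have heSMc : ∀ δu : H2T,
      eS ι2 D2T ιM ddT δu Mc = ⟪f, ι2 δu⟫ - ⟪C𝒞 (D2T u), D2T δu⟫ := by
    intro δu
    rw [eS, hMcι, hMcdd]
  have heq1 : ∀ δu : H2T,
      ⟪C𝒞 (D2T u), D2T δu⟫ + eS ι2 D2T ιM ddT δu Mc = ⟪f, ι2 δu⟫ := by
    intro δu; rw [heSMc]; ring
  -- a-priori bound on u
  have hubound : ‖u‖ ≤ (1 / α) * ‖f‖ := by
    have h1 := hquad
    have h3 : ⟪f, ι2 u⟫ ≤ ‖f‖ * ‖ι2 u‖ := real_inner_le_norm f (ι2 u)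
    have h4 : ‖ι2 u‖ ≤ ‖u‖ := hι2le u
    rcases (norm_nonneg u).eq_or_lt with h | h
    · rw [← h]; positivity
    · have h6 : α * ‖u‖ ≤ ‖f‖ := by
        have h7 : α * ‖u‖ * ‖u‖ ≤ ‖f‖ * ‖u‖ :=
          le_trans h1 (le_trans h3 (mul_le_mul_of_nonneg_left h4 (norm_nonneg f)))
        exact le_of_mul_le_mul_right h7 h
      rw [one_div, inv_mul_eq_div, le_div_iff₀ hα]
      linarith
  -- bound on Mc
  have hMcbound : ‖Mc‖ ≤ ‖C𝒞‖ * ‖u‖ + ‖f‖ := by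
    have h1 := normDDT Mc
    rw [hMcι, hMcdd] at h1
    have h2 : ‖C𝒞 (D2T u)‖ ≤ ‖C𝒞‖ * ‖D2T u‖ := C𝒞.le_opNorm _
    have h3 : ‖D2T u‖ ≤ ‖u‖ := hD2le u
    have h4 : ‖Mc‖ ≤ ‖C𝒞 (D2T u)‖ + ‖f‖ := by
      nlinarith [norm_nonneg Mc, norm_nonneg (C𝒞 (D2T u)), norm_nonneg f,
        mul_nonneg (norm_nonneg (C𝒞 (D2T u))) (norm_nonneg f)]
    have h5 : ‖C𝒞 (D2T u)‖ ≤ ‖C𝒞‖ * ‖u‖ := by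
      calc ‖C𝒞 (D2T u)‖ ≤ ‖C𝒞‖ * ‖D2T u‖ := h2
        _ ≤ ‖C𝒞‖ * ‖u‖ := by
          exact mul_le_mul_of_nonneg_left h3 (norm_nonneg _)
    linarith
  refine ⟨u, Mc, hMcAs, heq1, (hmem20 u).1 hu20, ?_, ?_, hHA20 u hu20,
    ⟨Mc, hMcAs, hMcι, hMcdd, fun v => rfl⟩⟩
  · -- uniqueness
    intro u' M0' hM0' heq1' htr'
    have hu'20 : u' ∈ H20 := (hmem20 u').2 htr'
    have hvar' : ∀ v : H2T, v ∈ H20 → ⟪C𝒞 (D2T u'), D2T v⟫ = ⟪f, ι2 v⟫ := by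
      intro v hv
      have h1 := heq1' v
      have h2 : eS ι2 D2T ιM ddT v M0' = 0 := (hmem20 v).1 hv M0' hM0'
      rw [h2, add_zero] at h1
      exact h1
    have hd20 : u' - u ∈ H20 := H20.sub_mem hu'20 hu20
    have hdiff : ⟪C𝒞 (D2T (u' - u)), D2T (u' - u)⟫ = 0 := by
      have h1 := hvar' (u' - u) hd20
      have h2 := hvar (u' - u) hd20
      have h3 : ⟪C𝒞 (D2T u') - C𝒞 (D2T u), D2T (u' - u)⟫ = 0 := by
        rw [inner_sub_left, h1, h2, sub_self]
      rw [map_sub, map_sub]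
      rw [map_sub] at h3
      exact h3
    have hD2zero : D2T (u' - u) = 0 := by
      have h1 := hCcoer (D2T (u' - u))
      rw [hdiff] at h1
      have h2 : ‖D2T (u' - u)‖ ^ 2 ≤ 0 := by
        have hcc := hc𝒞
        nlinarith
      have h3 : ‖D2T (u' - u)‖ = 0 := by nlinarith [norm_nonneg (D2T (u' - u))]
      exact norm_eq_zero.mp h3
    have hzero : u' - u = 0 := by
      have h1 := hPF20 (u' - u) hd20
      rw [hD2zero, norm_zero, mul_zero] at h1
      have h2 : ‖ι2 (u' - u)‖ = 0 := le_antisymm h1 (norm_nonneg _)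
      have h3 := normH2T (u' - u)
      rw [hD2zero, norm_zero, h2] at h3
      have h4 : ‖u' - u‖ = 0 := by nlinarith [norm_nonneg (u' - u)]
      exact norm_eq_zero.mp h4
    have huu : u' = u := by
      have := sub_eq_zero.mp hzero
      exact this
    refine ⟨huu, fun δu => ?_⟩
    have h1 := heq1' δu
    have h2 := heq1 δu
    rw [huu] at h1
    linarith
  · -- a-priori bound
    have hS : sInf {r : ℝ | ∃ M ∈ HAs,
        (∀ v : H2T, eS ι2 D2T ιM ddT v M = eS ι2 D2T ιM ddT v Mc) ∧ r = ‖M‖}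
        ≤ ‖Mc‖ := by
      apply csInf_le
      · refine ⟨0, fun r hr => ?_⟩
        obtain ⟨M, _, _, hrM⟩ := hr
        rw [hrM]; exact norm_nonneg M
      · exact ⟨Mc, hMcAs, fun v => rfl, rfl⟩
    have hcb : ‖C𝒞‖ * ‖u‖ ≤ ‖C𝒞‖ * ((1 / α) * ‖f‖) :=
      mul_le_mul_of_nonneg_left hubound (norm_nonneg _)
    have : ‖u‖ + sInf {r : ℝ | ∃ M ∈ HAs,
        (∀ v : H2T, eS ι2 D2T ιM ddT v M = eS ι2 D2T ιM ddT v Mc) ∧ r = ‖M‖}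
        ≤ (1 / α) * ‖f‖ + (‖C𝒞‖ * ((1 / α) * ‖f‖) + ‖f‖) := by
      have := hMcbound
      linarith
    calc ‖u‖ + sInf {r : ℝ | ∃ M ∈ HAs,
        (∀ v : H2T, eS ι2 D2T ιM ddT v M = eS ι2 D2T ιM ddT v Mc) ∧ r = ‖M‖}
        ≤ (1 / α) * ‖f‖ + (‖C𝒞‖ * ((1 / α) * ‖f‖) + ‖f‖) := this
      _ = ((1 + ‖C𝒞‖) / α + 1) * ‖f‖ := by
          field_simp
          ring


end
end

section
/- Let Ω ⊂ ℝ² be a Lipschitz polygon with mesh 𝒯, and define the normal-normal continuous broken space H_nn(div div,𝒯;𝕊) := {Q ∈ H(div div,𝒯;𝕊) : ⟨γ₂(v), Q⟩_𝒮 = 0 for all v ∈ H²₀(Ω) ∩ Π_T H¹₀(T)}, where ⟨γ₂(v), Q⟩_𝒮 := (D²v, Q)_𝒯 − (v, div div Q)_𝒯. Then the normal-normal continuous mixed formulation of the Kirchhoff–Love problem — find M ∈ H_nn(div div,𝒯;𝕊), u ∈ L²(Ω), ψ ∈ H^{3/2}₀(𝒮) := γ_{2,1}(H²₀(Ω)) satisfying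 (𝒞⁻¹M, δM) − (u, div div δM)_𝒯 − ⟨ψ, δM⟩_𝒮 = 0 and −(div div M, δu)_𝒯 − ⟨δψ, M⟩_𝒮 = −(f, δu) for all test functions — is well posed with mesh-independent stability ‖M‖_{divdiv,𝒯} + ‖u‖ + ‖ψ‖_{3/2,𝒮} ≤ C‖f‖, and its solution satisfies u ∈ H²₀(Ω), M = 𝒞D²u ∈ H(div div,Ω;𝕊), ψ = γ_{2,1}(u), div div M = f. -/
open scoped RealInnerProductSpace

noncomputable section

theorem aux_ineq2 {a m k F ci cis : ℝ} (hci : 0 < ci) (hcis : 0 < cis)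
    (h1 : ci * a ^ 2 ≤ k * a * m) (h2 : cis * m ≤ F) (ha : 0 ≤ a) (hm : 0 ≤ m)
    (hk : 0 ≤ k) : a ≤ k / (ci * cis) * F := by
  have hF : 0 ≤ F := le_trans (by positivity) h2
  rcases eq_or_lt_of_le ha with h0 | h0
  · rw [← h0]; positivity
  · have h3 : ci * a ≤ k * m := by nlinarith
    rw [div_mul_eq_mul_div, le_div_iff₀ (by positivity)]
    nlinarith

theorem aux_sqeq {a b : ℝ} (ha : 0 ≤ a) (hb : 0 ≤ b) (h : a ^ 2 = b ^ 2) : a = b :=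
  le_antisymm (by nlinarith) (by nlinarith)

theorem aux_normsum {a b c : ℝ} (ha : 0 ≤ a) (hb : 0 ≤ b) (hc : 0 ≤ c)
    (h : c ^ 2 = a ^ 2 + b ^ 2) : c ≤ a + b := by nlinarith

theorem aux_ineq {a b f c : ℝ} (hc : 0 < c) (h1 : a ^ 2 ≤ f * b) (h2 : c * b ≤ a)
    (ha : 0 ≤ a) (hf : 0 ≤ f) : c * a ≤ f := by
  rcases eq_or_lt_of_le ha with h0 | h0
  · rw [← h0, mul_zero]; exact hf
  · have h3 : c * a * a ≤ f * a := by nlinarith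
    exact le_of_mul_le_mul_right h3 h0

theorem aux_laxmilgram {V : Type*} [NormedAddCommGroup V] [InnerProductSpace ℝ V]
    [CompleteSpace V] (B : V →L[ℝ] V →L[ℝ] ℝ) (hB : IsCoercive B) (φ : V →L[ℝ] ℝ) :
    ∃ m : V, ∀ δ : V, B m δ = φ δ := by
  refine ⟨hB.continuousLinearEquivOfBilin.symm ((InnerProductSpace.toDual ℝ V).symm φ),
    fun δ => ?_⟩
  rw [← hB.continuousLinearEquivOfBilin_apply, ContinuousLinearEquiv.apply_symm_apply,
    InnerProductSpace.toDual_symm_apply]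

/-- Surjectivity with bounded right inverse from a bounded-below adjoint. -/
theorem aux_surj {E F : Type*} [NormedAddCommGroup E] [InnerProductSpace ℝ E] [CompleteSpace E]
    [NormedAddCommGroup F] [InnerProductSpace ℝ F] [CompleteSpace F]
    (T : E →L[ℝ] F) (c : ℝ) (hc : 0 < c)
    (h : ∀ g : F, c * ‖g‖ ≤ ‖ContinuousLinearMap.adjoint T g‖) :
    ∃ R : F →L[ℝ] E, (∀ f, T (R f) = f) ∧ ∀ f, c * ‖R f‖ ≤ ‖f‖ := by
  set Tad := ContinuousLinearMap.adjoint T with hTad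
  set S : F →L[ℝ] F := T.comp Tad with hS
  set B : F →L[ℝ] F →L[ℝ] ℝ := (innerSL ℝ).comp S with hB
  have hBapp : ∀ g w : F, B g w = ⟪T (Tad g), w⟫ := fun g w => rfl
  have hT1 : ∀ g w : F, ⟪T (Tad g), w⟫ = ⟪Tad g, Tad w⟫ := fun g w =>
    (ContinuousLinearMap.adjoint_inner_right T (Tad g) w).symm
  have hBc : IsCoercive B := by
    refine ⟨c ^ 2, by positivity, fun g => ?_⟩
    rw [hBapp, hT1, real_inner_self_eq_norm_sq]
    nlinarith [h g, mul_nonneg hc.le (norm_nonneg g), norm_nonneg g]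
  set Seq := hBc.continuousLinearEquivOfBilin with hSeq
  have hSeqS : ∀ g, Seq g = S g := by
    intro g
    apply ext_inner_right ℝ
    intro w
    rw [hBc.continuousLinearEquivOfBilin_apply]
    exact (hBapp g w).symm
  refine ⟨Tad.comp (Seq.symm : F →L[ℝ] F), fun f => ?_, fun f => ?_⟩
  · have : S (Seq.symm f) = f := by rw [← hSeqS]; exact Seq.apply_symm_apply f
    simpa [hS] using this
  · have hRapp : (Tad.comp (Seq.symm : F →L[ℝ] F)) f = Tad (Seq.symm f) := rfl
    rw [hRapp]
    obtain ⟨hh, hSh, hhh⟩ : ∃ hh : F, S hh = f ∧ Tad (Seq.symm f) = Tad hh :=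
      ⟨Seq.symm f, by rw [← hSeqS]; exact Seq.apply_symm_apply f, rfl⟩
    rw [hhh]
    have h1 : ‖Tad hh‖ ^ 2 ≤ ‖f‖ * ‖hh‖ := by
      have e1 : ‖Tad hh‖ ^ 2 = ⟪T (Tad hh), hh⟫ := by
        rw [hT1, real_inner_self_eq_norm_sq]
      have e2 : T (Tad hh) = f := hSh
      rw [e1, e2]
      exact real_inner_le_norm f hh
    exact aux_ineq hc h1 (h hh) (norm_nonneg _) (norm_nonneg _)
/- STATEMENT 19 (Theorem 3.19: well-posedness of the normal-normal continuous
mixed formulation (3.32) of the Kirchhoff–Love problem; conforming framework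
for Hellan–Herrmann–Johnson-type elements).  This is the instance `A = D²`,
`A* = div div`, `U = 𝕊` of the abstract mixed hybrid theorem, with the
intermediate space `H̃(A*,𝒯) = H_nn(div div,𝒯;𝕊)` strictly between
`H(div div,Ω;𝕊)` and the fully broken space.  Abstract encoding (the mesh `𝒯`
of the Lipschitz polygon `Ω` is fixed):
* `L2 = L²(Ω)`, `L2S = L²(Ω;𝕊)`;
* `H2T = H²(𝒯)`, `DDT = H(div div,𝒯;𝕊)` broken spaces with graph norms,
  embeddings `ι2`, `ιM` and piecewise operators `D2T = D²_𝒯`,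
  `ddT = (div div)_𝒯`;
* `HA = H²(Ω)`, `HAs = H(div div,Ω;𝕊)`; membership of `H²₀(Ω)` is
  `v ∈ HA ∧ ∀ M ∈ HAs, eS v M = 0`;
* `Z` models `H²₀(Ω) ∩ Π_T H¹₀(T)` (a subspace of `H²₀(Ω)`, `hZ`), and
  `Hnn = H_nn(div div,𝒯;𝕊) = {Q : ⟨γ₂(v), Q⟩_𝒮 = 0 ∀ v ∈ Z}` (`hHnn`);
* a trace `ψ ∈ H^{3/2}₀(𝒮) = γ_{2,1}(H²₀(Ω))` is represented by `u0 ∈ H²₀(Ω)`,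
  `⟨ψ, δM⟩_𝒮 = - eS u0 δM`, with minimum-extension norm `‖ψ‖_{3/2,𝒮}`;
* `C𝒞`, `Ci` are the rigidity tensor `𝒞` and its inverse `𝒞⁻¹`.
Verified hypotheses: Poincaré–Friedrichs `‖v‖ ≤ C‖D²v‖` on `H²₀(Ω)` and the
inf-sup condition (surjectivity of `div div : H(div div,Ω;𝕊) → L²(Ω)` via the
biharmonic problem), plus closedness/adjointness of `(D², div div)`.
Conclusion: (3.32) is well posed with mesh-independent stability
`‖M‖_{divdiv,𝒯} + ‖u‖ + ‖ψ‖_{3/2,𝒮} ≤ C‖f‖`; its solution satisfies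
`u ∈ H²₀(Ω)`, `M = 𝒞D²u ∈ H(div div,Ω;𝕊)`, `ψ = γ_{2,1}(u)`, `div div M = f`. -/
set_option maxHeartbeats 4000000 in
theorem kirchhoff_love_nn_continuous_mixed_wellposed
    {L2 L2S H2T DDT : Type*}
    [NormedAddCommGroup L2] [InnerProductSpace ℝ L2] [CompleteSpace L2]
    [NormedAddCommGroup L2S] [InnerProductSpace ℝ L2S] [CompleteSpace L2S]
    [NormedAddCommGroup H2T] [InnerProductSpace ℝ H2T] [CompleteSpace H2T]
    [NormedAddCommGroup DDT] [InnerProductSpace ℝ DDT] [CompleteSpace DDT]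
    (ι2 : H2T →L[ℝ] L2) (D2T : H2T →L[ℝ] L2S)
    (ιM : DDT →L[ℝ] L2S) (ddT : DDT →L[ℝ] L2)
    (normH2T : ∀ v : H2T, ‖v‖ ^ 2 = ‖ι2 v‖ ^ 2 + ‖D2T v‖ ^ 2)
    (normDDT : ∀ M : DDT, ‖M‖ ^ 2 = ‖ιM M‖ ^ 2 + ‖ddT M‖ ^ 2)
    (HA : Submodule ℝ H2T) (hHAcl : IsClosed (HA : Set H2T))    -- H²(Ω)
    (HAs : Submodule ℝ DDT) (hHAscl : IsClosed (HAs : Set DDT)) -- H(div div,Ω;𝕊)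
    -- Z models H²₀(Ω) ∩ Π_T H¹₀(T) ⊆ H²₀(Ω)
    (Z : Submodule ℝ H2T)
    (hZ : ∀ v ∈ Z, v ∈ HA ∧ ∀ M ∈ HAs, eS ι2 D2T ιM ddT v M = 0)
    -- Hnn = H_nn(div div,𝒯;𝕊), the normal-normal continuous broken space
    (Hnn : Submodule ℝ DDT) (hHnncl : IsClosed (Hnn : Set DDT))
    (hHnn : ∀ Q : DDT, Q ∈ Hnn ↔ ∀ v ∈ Z, eS ι2 D2T ιM ddT v Q = 0)
    -- 𝒞 and 𝒞⁻¹: symmetric, uniformly positive definite, mutually inverse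
    (C𝒞 Ci : L2S →L[ℝ] L2S)
    (hCsym : ∀ x y : L2S, ⟪C𝒞 x, y⟫ = ⟪x, C𝒞 y⟫)
    (hCisym : ∀ x y : L2S, ⟪Ci x, y⟫ = ⟪x, Ci y⟫)
    (hinv : ∀ x : L2S, C𝒞 (Ci x) = x) (hinv' : ∀ x : L2S, Ci (C𝒞 x) = x)
    (ci : ℝ) (hci : 0 < ci) (hCicoer : ∀ x : L2S, ci * ‖x‖ ^ 2 ≤ ⟪Ci x, x⟫)
    -- Poincaré–Friedrichs on H²₀(Ω)
    (CPF : ℝ) (hCPF : 0 < CPF)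
    (hPF : ∀ v : H2T, v ∈ HA → (∀ M ∈ HAs, eS ι2 D2T ιM ddT v M = 0) →
      ‖ι2 v‖ ≤ CPF * ‖D2T v‖)
    -- inf-sup: surjectivity of div div : H(div div,Ω;𝕊) → L²(Ω)
    (c_is : ℝ) (hcis : 0 < c_is)
    (hinfsup : ∀ g : L2,
      c_is * ‖g‖ ≤ sSup {r : ℝ | ∃ M ∈ HAs, ‖M‖ = 1 ∧ r = ⟪ddT M, g⟫})
    -- distributional characterization of H²₀(Ω)
    (hmaxA : ∀ (z : L2) (g : L2S),
      (∀ M ∈ HAs, ⟪z, ddT M⟫ = ⟪g, ιM M⟫) →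
      ∃ v : H2T, v ∈ HA ∧ (∀ M ∈ HAs, eS ι2 D2T ιM ddT v M = 0) ∧
        ι2 v = z ∧ D2T v = g)
    -- characterization of H(div div,Ω;𝕊) within H_nn(div div,𝒯;𝕊) (Lemma 4.2)
    (hmaxAs : ∀ Q ∈ Hnn,
      (∀ v : H2T, v ∈ HA → (∀ M ∈ HAs, eS ι2 D2T ιM ddT v M = 0) →
        eS ι2 D2T ιM ddT v Q = 0) → Q ∈ HAs) :
    ∃ C > 0, ∀ f : L2,
      ∃ (M : DDT) (u : L2) (u0 : H2T),
        M ∈ Hnn ∧ u0 ∈ HA ∧ (∀ Q ∈ HAs, eS ι2 D2T ιM ddT u0 Q = 0) ∧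
        -- (3.32a): (𝒞⁻¹M, δM) − (u, div div δM)_𝒯 − ⟨ψ, δM⟩_𝒮 = 0
        (∀ δM ∈ Hnn,
          ⟪Ci (ιM M), ιM δM⟫ - ⟪u, ddT δM⟫ + eS ι2 D2T ιM ddT u0 δM = 0) ∧
        -- (3.32b): −(div div M, δu)_𝒯 − ⟨δψ, M⟩_𝒮 = −(f, δu)
        (∀ (δu : L2) (v0 : H2T), v0 ∈ HA → (∀ Q ∈ HAs, eS ι2 D2T ιM ddT v0 Q = 0) →
          -⟪ddT M, δu⟫ + eS ι2 D2T ιM ddT v0 M = -⟪f, δu⟫) ∧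
        -- uniqueness of the solution (M, u, ψ)
        (∀ (M' : DDT) (u' : L2) (u0' : H2T),
          M' ∈ Hnn → u0' ∈ HA → (∀ Q ∈ HAs, eS ι2 D2T ιM ddT u0' Q = 0) →
          (∀ δM ∈ Hnn,
            ⟪Ci (ιM M'), ιM δM⟫ - ⟪u', ddT δM⟫ + eS ι2 D2T ιM ddT u0' δM = 0) →
          (∀ (δu : L2) (v0 : H2T), v0 ∈ HA →
            (∀ Q ∈ HAs, eS ι2 D2T ιM ddT v0 Q = 0) →
            -⟪ddT M', δu⟫ + eS ι2 D2T ιM ddT v0 M' = -⟪f, δu⟫) →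
          M' = M ∧ u' = u ∧
            ∀ Q ∈ Hnn, eS ι2 D2T ιM ddT u0' Q = eS ι2 D2T ιM ddT u0 Q) ∧
        -- mesh-independent stability: ‖M‖_{divdiv,𝒯} + ‖u‖ + ‖ψ‖_{3/2,𝒮} ≤ C‖f‖
        ‖M‖ + ‖u‖ + sInf {r : ℝ | ∃ v ∈ HA,
            (∀ Q ∈ Hnn, eS ι2 D2T ιM ddT v Q = eS ι2 D2T ιM ddT u0 Q) ∧ r = ‖v‖}
          ≤ C * ‖f‖ ∧
        -- regularity: u ∈ H²₀(Ω), M = 𝒞D²u ∈ H(div div,Ω;𝕊), ψ = γ_{2,1}(u),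
        -- div div M = f
        (∃ us : H2T, us ∈ HA ∧ (∀ Q ∈ HAs, eS ι2 D2T ιM ddT us Q = 0) ∧
          ι2 us = u ∧ ιM M = C𝒞 (D2T us) ∧ M ∈ HAs ∧ ddT M = f ∧
          ∀ Q ∈ Hnn, eS ι2 D2T ιM ddT us Q = eS ι2 D2T ιM ddT u0 Q) := by
  classical
  haveI : CompleteSpace HAs := hHAscl.completeSpace_coe
  have hMle : ∀ X : DDT, ‖ιM X‖ ≤ ‖X‖ := by
    intro X
    have := normDDT X
    nlinarith [norm_nonneg (ιM X), norm_nonneg X, sq_nonneg ‖ddT X‖]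
  -- HAs ⊆ Hnn
  have hHAsHnn : ∀ Q ∈ HAs, Q ∈ Hnn := fun Q hQ =>
    (hHnn Q).2 fun v hv => (hZ v hv).2 Q hQ
  -- the operator div div restricted to H(div div,Ω;𝕊)
  set T : HAs →L[ℝ] L2 := ddT.comp HAs.subtypeL with hTdef
  have hTapp : ∀ X : HAs, T X = ddT (X : DDT) := fun X => rfl
  have hTadlb : ∀ g : L2, c_is * ‖g‖ ≤ ‖ContinuousLinearMap.adjoint T g‖ := by
    intro g
    refine le_trans (hinfsup g) (Real.sSup_le ?_ (norm_nonneg _))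
    rintro r ⟨Q, hQ, hQn, rfl⟩
    have e1 : ⟪ddT Q, g⟫ = ⟪(⟨Q, hQ⟩ : HAs), ContinuousLinearMap.adjoint T g⟫ :=
      (ContinuousLinearMap.adjoint_inner_right T (⟨Q, hQ⟩ : HAs) g).symm
    have e2 : ‖(⟨Q, hQ⟩ : HAs)‖ = ‖Q‖ := rfl
    calc ⟪ddT Q, g⟫ ≤ ‖(⟨Q, hQ⟩ : HAs)‖ * ‖ContinuousLinearMap.adjoint T g‖ := by
          rw [e1]; exact real_inner_le_norm _ _
      _ = ‖ContinuousLinearMap.adjoint T g‖ := by rw [e2, hQn, one_mul]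
  obtain ⟨R, hR1, hR2⟩ := aux_surj T c_is hcis hTadlb
  -- the kernel of T and the quadratic form on it
  haveI : CompleteSpace (LinearMap.ker (T : HAs →ₗ[ℝ] L2)) := by
    exact (ContinuousLinearMap.isClosed_ker T).completeSpace_coe
  set J : (LinearMap.ker (T : HAs →ₗ[ℝ] L2)) →L[ℝ] L2S :=
    (ιM.comp HAs.subtypeL).comp (LinearMap.ker (T : HAs →ₗ[ℝ] L2)).subtypeL with hJdef
  have hJapp : ∀ δ : LinearMap.ker (T : HAs →ₗ[ℝ] L2), J δ = ιM ((δ : HAs) : DDT) := fun _ => rfl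
  set B0 : (LinearMap.ker (T : HAs →ₗ[ℝ] L2)) →L[ℝ] (LinearMap.ker (T : HAs →ₗ[ℝ] L2)) →L[ℝ] ℝ :=
    ((((innerSL ℝ).comp (Ci.comp J)).flip).comp J).flip with hB0def
  have hB0app : ∀ x y, B0 x y = ⟪Ci (J x), J y⟫ := fun x y => rfl
  have hnormE0 : ∀ x : LinearMap.ker (T : HAs →ₗ[ℝ] L2), ‖x‖ = ‖J x‖ := by
    intro x
    have h0 : ddT ((x : HAs) : DDT) = 0 := x.2
    have h1 : ‖x‖ = ‖((x : HAs) : DDT)‖ := rfl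
    have h2 := normDDT ((x : HAs) : DDT)
    rw [h0, norm_zero] at h2
    refine aux_sqeq (norm_nonneg _) (norm_nonneg _) ?_
    rw [h1, hJapp, h2]; ring
  have hB0c : IsCoercive B0 := by
    refine ⟨ci, hci, fun x => ?_⟩
    rw [hB0app, hnormE0 x]
    calc ci * ‖J x‖ * ‖J x‖ = ci * ‖J x‖ ^ 2 := by ring
      _ ≤ ⟪Ci (J x), J x⟫ := hCicoer _
  -- constants
  have ha1nn : (0:ℝ) ≤ ‖Ci‖ / (ci * c_is) := by positivity
  have hb1nn : (0:ℝ) ≤ ‖Ci‖ * (‖Ci‖ / (ci * c_is)) := by positivity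
  refine ⟨‖Ci‖ / (ci * c_is) + 1 + (2 * CPF + 1) * (‖Ci‖ * (‖Ci‖ / (ci * c_is))),
    by nlinarith, fun f => ?_⟩
  set a1 : ℝ := ‖Ci‖ / (ci * c_is) with ha1def
  set b1 : ℝ := ‖Ci‖ * a1 with hb1def
  -- construction of the moment tensor
  set Mf : HAs := R f with hMfdef
  set φ : (LinearMap.ker (T : HAs →ₗ[ℝ] L2)) →L[ℝ] ℝ :=
    -((innerSL ℝ (Ci (ιM (Mf : DDT)))).comp J) with hφdef
  have hφapp : ∀ δ, φ δ = -⟪Ci (ιM (Mf : DDT)), J δ⟫ := fun δ => rfl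
  obtain ⟨m0, hm0'⟩ := aux_laxmilgram (V := LinearMap.ker (T : HAs →ₗ[ℝ] L2)) B0 hB0c φ
  have hm0 : ∀ δ : LinearMap.ker (T : HAs →ₗ[ℝ] L2), ⟪Ci (J m0), J δ⟫ = φ δ := by
    intro δ
    rw [← hB0app]
    exact hm0' δ
  set Mhat : HAs := Mf + (m0 : HAs) with hMhatdef
  set M : DDT := (Mhat : DDT) with hMdef
  have hMmem : M ∈ HAs := Mhat.2
  have hMcoe : M = (Mf : DDT) + ((m0 : HAs) : DDT) := rfl
  have hddTM : ddT M = f := by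
    have h2 : T (m0 : HAs) = 0 := m0.2
    have h3 := hR1 f
    calc ddT M = ddT (Mf : DDT) + ddT ((m0 : HAs) : DDT) := by rw [hMcoe, map_add]
      _ = T Mf + T (m0 : HAs) := rfl
      _ = f := by rw [h2, add_zero]; exact h3
  have hιMM : ιM M = J m0 + ιM (Mf : DDT) := by
    rw [hMcoe, map_add, hJapp]; exact add_comm _ _
  have hvar : ∀ δ : LinearMap.ker (T : HAs →ₗ[ℝ] L2), ⟪Ci (ιM M), J δ⟫ = 0 := by
    intro δ
    rw [hιMM, map_add, inner_add_left, hm0 δ, hφapp]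
    ring
  -- the deflection and its trace representative
  set ℓ : L2 →L[ℝ] ℝ :=
    (innerSL ℝ (Ci (ιM M))).comp ((ιM.comp HAs.subtypeL).comp R) with hℓdef
  set z : L2 := (InnerProductSpace.toDual ℝ L2).symm ℓ with hzdef
  have hzapp : ∀ x : L2, ⟪z, x⟫ = ⟪Ci (ιM M), ιM ((R x : HAs) : DDT)⟫ := fun x => by
    rw [hzdef, InnerProductSpace.toDual_symm_apply]; rfl
  have hkey : ∀ Q ∈ HAs, ⟪z, ddT Q⟫ = ⟪Ci (ιM M), ιM Q⟫ := by
    intro Q hQ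
    have hδmem : ((⟨Q, hQ⟩ : HAs) - R (ddT Q)) ∈ LinearMap.ker (T : HAs →ₗ[ℝ] L2) := by
      rw [LinearMap.mem_ker, map_sub, ContinuousLinearMap.coe_coe, hR1]
      have : T (⟨Q, hQ⟩ : HAs) = ddT Q := rfl
      rw [this, sub_self]
    have h2 := hvar ⟨_, hδmem⟩
    have h3 : J ⟨_, hδmem⟩ = ιM Q - ιM ((R (ddT Q) : HAs) : DDT) := by
      rw [hJapp]
      have : (((⟨Q, hQ⟩ : HAs) - R (ddT Q) : HAs) : DDT)
          = Q - ((R (ddT Q) : HAs) : DDT) := rfl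
      rw [this, map_sub]
    rw [h3, inner_sub_right, sub_eq_zero] at h2
    rw [hzapp, ← h2]
  obtain ⟨u0, hu0A, hu00, hz, hg⟩ := hmaxA z (Ci (ιM M)) hkey
  -- bound on ιM M
  have hιMb : ‖ιM M‖ ≤ a1 * ‖f‖ := by
    have h1 : ⟪Ci (ιM M), ιM M⟫ = ⟪Ci (ιM M), ιM (Mf : DDT)⟫ := by
      nth_rewrite 2 [hιMM]
      rw [inner_add_right, hvar m0, zero_add]
    have h2 : ci * ‖ιM M‖ ^ 2 ≤ ⟪Ci (ιM M), ιM M⟫ := hCicoer _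
    have h3 : ⟪Ci (ιM M), ιM (Mf : DDT)⟫ ≤ ‖Ci‖ * ‖ιM M‖ * ‖(Mf : DDT)‖ := by
      calc ⟪Ci (ιM M), ιM (Mf : DDT)⟫ ≤ ‖Ci (ιM M)‖ * ‖ιM (Mf : DDT)‖ :=
            real_inner_le_norm _ _
        _ ≤ (‖Ci‖ * ‖ιM M‖) * ‖ιM (Mf : DDT)‖ :=
            mul_le_mul_of_nonneg_right (Ci.le_opNorm _) (norm_nonneg _)
        _ ≤ ‖Ci‖ * ‖ιM M‖ * ‖(Mf : DDT)‖ :=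
            mul_le_mul_of_nonneg_left (hMle _) (by positivity)
    have h5 : c_is * ‖(Mf : DDT)‖ ≤ ‖f‖ := hR2 f
    exact aux_ineq2 hci hcis (le_trans h2 (le_trans (le_of_eq h1) h3)) h5
      (norm_nonneg _) (norm_nonneg _) (norm_nonneg _)
  -- the solution
  refine ⟨M, z, u0, hHAsHnn M hMmem, hu0A, hu00, ?_, ?_, ?_, ?_, ?_⟩
  · -- (3.32a)
    intro δM _
    have e1 := real_inner_comm z (ddT δM)
    have e2 := real_inner_comm (Ci (ιM M)) (ιM δM)
    simp only [eS, hz, hg]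
    linarith
  · -- (3.32b)
    intro δu v0 hv0A hv00
    rw [hddTM, hv00 M hMmem, add_zero]
  · -- uniqueness
    intro M' u' u0' hM' hu0'A hu0'0 heq1' heq2'
    have heS0 : ∀ Q : DDT, eS ι2 D2T ιM ddT 0 Q = 0 := by
      intro Q; simp [eS]
    have hddTM' : ddT M' = f := by
      have h1 : ∀ δu : L2, ⟪ddT M' - f, δu⟫ = 0 := by
        intro δu
        have := heq2' δu 0 HA.zero_mem (fun Q _ => heS0 Q)
        rw [heS0] at this
        rw [inner_sub_left]
        linarith
      have := h1 (ddT M' - f)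
      rw [inner_self_eq_zero, sub_eq_zero] at this
      exact this
    have hNdd : ddT (M' - M) = 0 := by rw [map_sub, hddTM', hddTM, sub_self]
    have hNHnn : M' - M ∈ Hnn := Hnn.sub_mem hM' (hHAsHnn M hMmem)
    have hNHAs : M' - M ∈ HAs := by
      refine hmaxAs _ hNHnn fun v hvA hv0 => ?_
      have h1 : eS ι2 D2T ιM ddT v M' = 0 := by
        have := heq2' 0 v hvA hv0
        simpa using this
      have h2 : eS ι2 D2T ιM ddT v M = 0 := hv0 M hMmem
      simp only [eS, map_sub, inner_sub_left]
      simp only [eS] at h1 h2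
      linarith
    have hMM' : M' = M := by
      have h1 := heq1' (M' - M) hNHnn
      have h2 : ⟪Ci (ιM M), ιM (M' - M)⟫ - ⟪z, ddT (M' - M)⟫
          + eS ι2 D2T ιM ddT u0 (M' - M) = 0 := by
        have e1 := real_inner_comm z (ddT (M' - M))
        have e2 := real_inner_comm (Ci (ιM M)) (ιM (M' - M))
        simp only [eS, hz, hg]
        linarith
      rw [hu0'0 _ hNHAs] at h1
      rw [hu00 _ hNHAs] at h2
      rw [hNdd, inner_zero_right] at h1 h2
      rw [map_sub (ιM)] at h1 h2
      have h3 : ⟪Ci (ιM (M' - M)), ιM (M' - M)⟫ = 0 := by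
        rw [map_sub (ιM), map_sub Ci, inner_sub_left]
        linarith
      have h4 := hCicoer (ιM (M' - M))
      rw [h3] at h4
      have h5 : ‖ιM (M' - M)‖ ^ 2 = 0 := by
        rw [← mul_zero ci] at h4
        exact le_antisymm (le_of_mul_le_mul_left h4 hci) (sq_nonneg _)
      rw [pow_eq_zero_iff (two_ne_zero)] at h5
      have h6 := normDDT (M' - M)
      rw [h5, hNdd, norm_zero] at h6
      have h7 : ‖M' - M‖ ^ 2 = 0 := by rw [h6]; norm_num
      rw [pow_eq_zero_iff (two_ne_zero), norm_eq_zero, sub_eq_zero] at h7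
      exact h7
    have huu' : u' = z := by
      have h1 : ∀ Q ∈ HAs, ⟪u' - z, ddT Q⟫ = 0 := by
        intro Q hQ
        have h2 := heq1' Q (hHAsHnn Q hQ)
        rw [hMM', hu0'0 Q hQ] at h2
        have h3 : ⟪Ci (ιM M), ιM Q⟫ - ⟪z, ddT Q⟫ = 0 := by
          rw [← hkey Q hQ]; ring
        rw [inner_sub_left]
        linarith
      have h4 := h1 ((R (u' - z) : HAs) : DDT) (R (u' - z)).2
      have h5 : ddT ((R (u' - z) : HAs) : DDT) = u' - z := hR1 _
      rw [h5, inner_self_eq_zero, sub_eq_zero] at h4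
      exact h4
    refine ⟨hMM', huu', fun Q hQ => ?_⟩
    have h1 := heq1' Q hQ
    rw [hMM', huu'] at h1
    have h2 : ⟪Ci (ιM M), ιM Q⟫ - ⟪z, ddT Q⟫ + eS ι2 D2T ιM ddT u0 Q = 0 := by
      have e1 := real_inner_comm z (ddT Q)
      have e2 := real_inner_comm (Ci (ιM M)) (ιM Q)
      simp only [eS, hz, hg]
      linarith
    linarith
  · -- stability
    have hMn : ‖M‖ ≤ a1 * ‖f‖ + ‖f‖ := by
      have h1 : ‖M‖ ≤ ‖ιM M‖ + ‖ddT M‖ :=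
        aux_normsum (norm_nonneg _) (norm_nonneg _) (norm_nonneg _) (normDDT M)
      rw [hddTM] at h1
      linarith
    have hD2 : ‖D2T u0‖ ≤ b1 * ‖f‖ := by
      rw [hg]
      calc ‖Ci (ιM M)‖ ≤ ‖Ci‖ * ‖ιM M‖ := Ci.le_opNorm _
        _ ≤ ‖Ci‖ * (a1 * ‖f‖) := mul_le_mul_of_nonneg_left hιMb (norm_nonneg _)
        _ = b1 * ‖f‖ := by rw [hb1def]; ring
    have hzn : ‖z‖ ≤ CPF * (b1 * ‖f‖) := by
      rw [← hz]
      exact le_trans (hPF u0 hu0A hu00) (mul_le_mul_of_nonneg_left hD2 hCPF.le)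
    have hu0n : ‖u0‖ ≤ CPF * (b1 * ‖f‖) + b1 * ‖f‖ := by
      have h1 : ‖u0‖ ≤ ‖ι2 u0‖ + ‖D2T u0‖ :=
        aux_normsum (norm_nonneg _) (norm_nonneg _) (norm_nonneg _) (normH2T u0)
      have h2 : ‖ι2 u0‖ ≤ CPF * (b1 * ‖f‖) := by rw [hz]; exact hzn
      linarith
    have hsinf : sInf {r : ℝ | ∃ v ∈ HA,
        (∀ Q ∈ Hnn, eS ι2 D2T ιM ddT v Q = eS ι2 D2T ιM ddT u0 Q) ∧ r = ‖v‖} ≤ ‖u0‖ := by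
      refine csInf_le ⟨0, ?_⟩ ⟨u0, hu0A, fun Q _ => rfl, rfl⟩
      rintro r ⟨v, -, -, rfl⟩
      exact norm_nonneg v
    calc ‖M‖ + ‖z‖ + sInf {r : ℝ | ∃ v ∈ HA,
          (∀ Q ∈ Hnn, eS ι2 D2T ιM ddT v Q = eS ι2 D2T ιM ddT u0 Q) ∧ r = ‖v‖}
        ≤ (a1 * ‖f‖ + ‖f‖) + CPF * (b1 * ‖f‖) + (CPF * (b1 * ‖f‖) + b1 * ‖f‖) := by
          linarith
      _ = (a1 + 1 + (2 * CPF + 1) * b1) * ‖f‖ := by ring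
  · -- regularity
    refine ⟨u0, hu0A, hu00, hz, ?_, hMmem, hddTM, fun Q _ => rfl⟩
    rw [hg, hinv]

end
end
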